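/- arXiv:2005.09408 — 4 statements merged into one kernel-verified Lean document; each statement's English description precedes it below -/
import Mathlib

section
/- Let M ∈ ℝ^{n×n} satisfy zᵀMz ≥ 0 for all z ∈ ℝⁿ, let q ∈ ℝⁿ, let S ⊆ ℝⁿ, and let F(x) = Mx + q. If x and y are both solutions of VI(S, F), then (M + Mᵀ)x = (M + Mᵀ)y. In particular, there exists c ∈ ℝⁿ such that every solution x of VI(S, F) satisfies (M + Mᵀ)x = c. -/
/-!
Testing each solution against the other and adding the two inequalities gives
`(x - y)ᵀ M (x - y) ≤ 0`, hence `= 0`. Since `M + Mᵀ` is symmetric positive semidefinite and its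
quadratic form is twice that of `M`, the vector `x - y` lies in the kernel of `M + Mᵀ`.
-/

open Matrix

variable {ι : Type*} [Fintype ι]

def IsVISolution (S : Set (ι → ℝ)) (F : (ι → ℝ) → ι → ℝ) (x : ι → ℝ) : Prop :=
  x ∈ S ∧ ∀ z ∈ S, 0 ≤ (z - x) ⬝ᵥ F x

theorem IsVISolution.dotProduct_sub_nonpos {S : Set (ι → ℝ)} {F : (ι → ℝ) → ι → ℝ}
    {x y : ι → ℝ} (hx : IsVISolution S F x) (hy : IsVISolution S F y) :
    (x - y) ⬝ᵥ (F x - F y) ≤ 0 := by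
  have hxy := hx.2 y hy.1
  have hyx := hy.2 x hx.1
  have h : (x - y) ⬝ᵥ (F x - F y) = -((y - x) ⬝ᵥ F x + (x - y) ⬝ᵥ F y) := by
    simp only [dotProduct_sub, sub_dotProduct]
    ring
  linarith

theorem dotProduct_add_transpose_mulVec (M : Matrix ι ι ℝ) (z : ι → ℝ) :
    z ⬝ᵥ (M + Mᵀ) *ᵥ z = 2 * (z ⬝ᵥ M *ᵥ z) := by
  rw [add_mulVec, dotProduct_add, mulVec_transpose, dotProduct_comm z (z ᵥ* M),
    ← dotProduct_mulVec]
  ring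

theorem posSemidef_add_transpose {M : Matrix ι ι ℝ} (hM : ∀ z, 0 ≤ z ⬝ᵥ M *ᵥ z) :
    (M + Mᵀ).PosSemidef := by
  refine posSemidef_iff_dotProduct_mulVec.mpr ⟨isHermitian_add_transpose_self M, fun z => ?_⟩
  rw [star_trivial, dotProduct_add_transpose_mulVec]
  linarith [hM z]

theorem add_transpose_mulVec_eq_zero {M : Matrix ι ι ℝ} (hM : ∀ z, 0 ≤ z ⬝ᵥ M *ᵥ z)
    {d : ι → ℝ} (hd : d ⬝ᵥ M *ᵥ d = 0) : (M + Mᵀ) *ᵥ d = 0 := by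
  refine ((posSemidef_add_transpose hM).dotProduct_mulVec_zero_iff d).mp ?_
  rw [star_trivial, dotProduct_add_transpose_mulVec, hd, mul_zero]

theorem IsVISolution.add_transpose_mulVec_eq {M : Matrix ι ι ℝ} (hM : ∀ z, 0 ≤ z ⬝ᵥ M *ᵥ z)
    {q : ι → ℝ} {S : Set (ι → ℝ)} {x y : ι → ℝ}
    (hx : IsVISolution S (fun x => M *ᵥ x + q) x) (hy : IsVISolution S (fun x => M *ᵥ x + q) y) :
    (M + Mᵀ) *ᵥ x = (M + Mᵀ) *ᵥ y := by
  have hnonpos : (x - y) ⬝ᵥ M *ᵥ (x - y) ≤ 0 := by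
    simpa [mulVec_sub] using hx.dotProduct_sub_nonpos hy
  have hzero := add_transpose_mulVec_eq_zero hM (le_antisymm hnonpos (hM (x - y)))
  rwa [mulVec_sub, sub_eq_zero] at hzero

/-- If `zᵀMz ≥ 0` for all `z` and `x, y` are both solutions of `VI(S, F)` with
`F x = M x + q`, then `(M + Mᵀ)x = (M + Mᵀ)y`; in particular there exists `c`
such that every solution `x` satisfies `(M + Mᵀ)x = c`. -/
theorem VI_solutions_common_c (n : ℕ) (M : Matrix (Fin n) (Fin n) ℝ)
    (q : Fin n → ℝ) (S : Set (Fin n → ℝ))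
    (hpsd : ∀ z : Fin n → ℝ, 0 ≤ z ⬝ᵥ M.mulVec z) :
    (∀ x y : Fin n → ℝ,
        (x ∈ S ∧ ∀ z ∈ S, 0 ≤ (z - x) ⬝ᵥ (M.mulVec x + q)) →
        (y ∈ S ∧ ∀ z ∈ S, 0 ≤ (z - y) ⬝ᵥ (M.mulVec y + q)) →
        (M + Mᵀ).mulVec x = (M + Mᵀ).mulVec y) ∧
    (∃ c : Fin n → ℝ, ∀ x : Fin n → ℝ,
        (x ∈ S ∧ ∀ z ∈ S, 0 ≤ (z - x) ⬝ᵥ (M.mulVec x + q)) →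
        (M + Mᵀ).mulVec x = c) := by
  have common : ∀ x y, IsVISolution S (fun x => M *ᵥ x + q) x →
      IsVISolution S (fun x => M *ᵥ x + q) y → (M + Mᵀ) *ᵥ x = (M + Mᵀ) *ᵥ y :=
    fun _ _ hx hy => hx.add_transpose_mulVec_eq hpsd hy
  refine ⟨common, ?_⟩
  by_cases h : ∃ x₀, IsVISolution S (fun x => M *ᵥ x + q) x₀
  · obtain ⟨x₀, hx₀⟩ := h
    exact ⟨(M + Mᵀ) *ᵥ x₀, fun x hx => common x x₀ hx hx₀⟩
  · exact ⟨0, fun x hx => absurd ⟨x, hx⟩ h⟩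
end

section
/- (Minty's lemma.) Let S ⊆ ℝⁿ be convex, let F : ℝⁿ → ℝⁿ be continuous and monotone, and let x ∈ S. Then (y − x)ᵀF(x) ≥ 0 for all y ∈ S if and only if (y − x)ᵀF(y) ≥ 0 for all y ∈ S. -/
/-! Monotonicity turns `(y - x)ᵀF(x) ≥ 0` into `(y - x)ᵀF(y) ≥ 0` directly. Conversely, apply the
hypothesis at `x + t(y - x) ∈ S` for `t ∈ (0, 1]`: after dividing by `t` it says
`(y - x)ᵀF(x + t(y - x)) ≥ 0`, and letting `t → 0⁺` gives `(y - x)ᵀF(x) ≥ 0` by continuity. -/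

open Matrix Set

section

variable {ι : Type*} [Fintype ι]

theorem dotProduct_nonneg_of_monotone {R : Type*} [CommRing R] [PartialOrder R]
    [IsOrderedRing R] {F : (ι → R) → ι → R} (hF : ∀ x y, 0 ≤ (F x - F y) ⬝ᵥ (x - y))
    {x y : ι → R} (h : 0 ≤ (y - x) ⬝ᵥ F x) : 0 ≤ (y - x) ⬝ᵥ F y := by
  have hsplit : (y - x) ⬝ᵥ F y = (y - x) ⬝ᵥ F x + (F y - F x) ⬝ᵥ (y - x) := by
    rw [sub_dotProduct (F y), dotProduct_comm (F y), dotProduct_comm (F x)]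
    ring
  rw [hsplit]
  exact add_nonneg h (hF y x)

theorem nonneg_at_zero_of_nonneg_on_Ioc {g : ℝ → ℝ} (hg : Continuous g)
    (h : ∀ t ∈ Ioc (0 : ℝ) 1, 0 ≤ g t) : 0 ≤ g 0 := by
  have hclosure : (0 : ℝ) ∈ closure (Ioc 0 1) := by
    rw [closure_Ioc zero_ne_one]
    exact ⟨le_rfl, zero_le_one⟩
  exact (isClosed_le continuous_const hg).closure_subset_iff.mpr h hclosure

theorem dotProduct_nonneg_of_starConvex {S : Set (ι → ℝ)} {F : (ι → ℝ) → ι → ℝ}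
    (hF : Continuous F) {x : ι → ℝ} (hS : StarConvex ℝ x S)
    (h : ∀ z ∈ S, 0 ≤ (z - x) ⬝ᵥ F z) {y : ι → ℝ} (hy : y ∈ S) :
    0 ≤ (y - x) ⬝ᵥ F x := by
  have hsegment : ∀ t ∈ Ioc (0 : ℝ) 1, 0 ≤ (y - x) ⬝ᵥ F (x + t • (y - x)) := by
    intro t ⟨ht₀, ht₁⟩
    have hz := h _ (hS.add_smul_sub_mem hy ht₀.le ht₁)
    rw [add_sub_cancel_left, smul_dotProduct, smul_eq_mul] at hz
    exact nonneg_of_mul_nonneg_right hz ht₀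
  simpa using nonneg_at_zero_of_nonneg_on_Ioc
    (continuous_const.dotProduct (hF.comp (continuous_const.add
      (continuous_id.smul continuous_const)))) hsegment

end

/-- Minty's lemma: for `S ⊆ ℝⁿ` convex, `F` continuous and monotone, and
`x ∈ S`, one has `(y − x)ᵀF(x) ≥ 0` for all `y ∈ S` iff
`(y − x)ᵀF(y) ≥ 0` for all `y ∈ S`. -/
theorem minty_lemma (n : ℕ) (S : Set (Fin n → ℝ))
    (F : (Fin n → ℝ) → (Fin n → ℝ)) (hS : Convex ℝ S)
    (hFcont : Continuous F)
    (hFmono : ∀ x y : Fin n → ℝ, 0 ≤ (F x - F y) ⬝ᵥ (x - y))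
    (x : Fin n → ℝ) (hx : x ∈ S) :
    (∀ y ∈ S, 0 ≤ (y - x) ⬝ᵥ F x) ↔ (∀ y ∈ S, 0 ≤ (y - x) ⬝ᵥ F y) :=
  ⟨fun h y hy => dotProduct_nonneg_of_monotone hFmono (h y hy),
    fun h _ hy => dotProduct_nonneg_of_starConvex hFcont (hS.starConvex hx) h hy⟩
end

section
/- Let S ⊆ ℝⁿ be a nonempty, convex and closed set and let F : ℝⁿ → ℝⁿ be continuous and monotone. Then the solution set SOL(S, F) = { x ∈ S : (y − x)ᵀF(x) ≥ 0 for all y ∈ S } is convex and closed; moreover, if S is compact, then SOL(S, F) is compact. -/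
/-! By monotonicity every solution `x` of `VI(S, F)` satisfies the Minty inequalities
`(y - x)ᵀF(y) ≥ 0` for all `y ∈ S`; conversely, if `x` satisfies them, testing at
`x + t (y - x)` and letting `t → 0⁺` recovers `(y - x)ᵀF(x) ≥ 0` by continuity of `F`.
So `SOL(S, F)` is the intersection of `S` with the half-spaces `{x | (y - x)ᵀF(y) ≥ 0}`,
`y ∈ S`, hence convex and closed, and compact when `S` is. -/

open Matrix Set

namespace VariationalInequality

variable {ι : Type*} [Fintype ι] (S : Set (ι → ℝ)) (F : (ι → ℝ) → ι → ℝ)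

def solutions : Set (ι → ℝ) := {x | x ∈ S ∧ ∀ y ∈ S, 0 ≤ (y - x) ⬝ᵥ F x}

def mintySolutions : Set (ι → ℝ) := {x | x ∈ S ∧ ∀ y ∈ S, 0 ≤ (y - x) ⬝ᵥ F y}

theorem mintySolutions_eq_inter_biInter :
    mintySolutions S F = S ∩ ⋂ y ∈ S, {x | 0 ≤ (y - x) ⬝ᵥ F y} := by
  ext x
  simp only [mintySolutions, mem_ofPred_eq, mem_inter_iff, mem_iInter]

theorem convex_halfSpace_sub_dotProduct (y v : ι → ℝ) :
    Convex ℝ {x : ι → ℝ | 0 ≤ (y - x) ⬝ᵥ v} := by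
  simp only [sub_dotProduct, sub_nonneg]
  exact convex_halfSpace_le ⟨fun a b => add_dotProduct a b v, fun c a => smul_dotProduct c a v⟩ _

theorem isClosed_halfSpace_sub_dotProduct (y v : ι → ℝ) :
    IsClosed {x : ι → ℝ | 0 ≤ (y - x) ⬝ᵥ v} :=
  isClosed_le continuous_const ((continuous_const.sub continuous_id).dotProduct continuous_const)

variable {S F}

theorem convex_mintySolutions (hS : Convex ℝ S) : Convex ℝ (mintySolutions S F) := by
  rw [mintySolutions_eq_inter_biInter]
  exact hS.inter (convex_iInter₂ fun y _ => convex_halfSpace_sub_dotProduct y (F y))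

theorem isClosed_mintySolutions (hS : IsClosed S) : IsClosed (mintySolutions S F) := by
  rw [mintySolutions_eq_inter_biInter]
  exact hS.inter (isClosed_biInter fun y _ => isClosed_halfSpace_sub_dotProduct y (F y))

theorem solutions_subset_mintySolutions (hF : ∀ x y : ι → ℝ, 0 ≤ (F x - F y) ⬝ᵥ (x - y)) :
    solutions S F ⊆ mintySolutions S F := by
  rintro x ⟨hxS, hx⟩
  refine ⟨hxS, fun y hy => ?_⟩
  have hmono := hF y x
  rw [sub_dotProduct, dotProduct_comm (F y), dotProduct_comm (F x)] at hmono
  linarith [hx y hy]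

theorem mintySolutions_subset_solutions (hS : Convex ℝ S) (hF : Continuous F) :
    mintySolutions S F ⊆ solutions S F := by
  rintro x ⟨hxS, hx⟩
  refine ⟨hxS, fun y hy => ?_⟩
  let g : ℝ → ℝ := fun t => (y - x) ⬝ᵥ F (x + t • (y - x))
  have hg : Continuous g :=
    continuous_const.dotProduct (hF.comp (continuous_const.add (continuous_id.smul continuous_const)))
  have hpos : Ioc (0 : ℝ) 1 ⊆ {t | 0 ≤ g t} := by
    intro t ht
    have h := hx _ (hS.add_smul_sub_mem hxS hy (Ioc_subset_Icc_self ht))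
    rw [add_sub_cancel_left, smul_dotProduct, smul_eq_mul] at h
    exact nonneg_of_mul_nonneg_right h ht.1
  have h0 : (0 : ℝ) ∈ closure (Ioc (0 : ℝ) 1) := by
    rw [closure_Ioc zero_ne_one]
    exact left_mem_Icc.2 zero_le_one
  simpa [g] using (isClosed_le continuous_const hg).closure_subset_iff.2 hpos h0

theorem solutions_eq_mintySolutions (hS : Convex ℝ S) (hFc : Continuous F)
    (hFm : ∀ x y : ι → ℝ, 0 ≤ (F x - F y) ⬝ᵥ (x - y)) :
    solutions S F = mintySolutions S F :=
  (solutions_subset_mintySolutions hFm).antisymm (mintySolutions_subset_solutions hS hFc)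

end VariationalInequality

open VariationalInequality in
theorem VI_solution_set_convex_closed_compact_general (n : ℕ) (S : Set (Fin n → ℝ))
    (F : (Fin n → ℝ) → (Fin n → ℝ))
    (hSconv : Convex ℝ S) (hSclosed : IsClosed S)
    (hFcont : Continuous F)
    (hFmono : ∀ x y : Fin n → ℝ, 0 ≤ (F x - F y) ⬝ᵥ (x - y)) :
    Convex ℝ {x : Fin n → ℝ | x ∈ S ∧ ∀ y ∈ S, 0 ≤ (y - x) ⬝ᵥ F x} ∧
    IsClosed {x : Fin n → ℝ | x ∈ S ∧ ∀ y ∈ S, 0 ≤ (y - x) ⬝ᵥ F x} ∧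
    (IsCompact S →
      IsCompact {x : Fin n → ℝ | x ∈ S ∧ ∀ y ∈ S, 0 ≤ (y - x) ⬝ᵥ F x}) := by
  change Convex ℝ (solutions S F) ∧ IsClosed (solutions S F) ∧
    (IsCompact S → IsCompact (solutions S F))
  rw [solutions_eq_mintySolutions hSconv hFcont hFmono]
  have hclosed := isClosed_mintySolutions (F := F) hSclosed
  exact ⟨convex_mintySolutions hSconv, hclosed,
    fun hScomp => hScomp.of_isClosed_subset hclosed fun _ hx => hx.1⟩

/-- For `S` nonempty, convex and closed and `F` continuous and monotone,
the solution set `SOL(S, F)` is convex and closed; if moreover `S` is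
compact, then `SOL(S, F)` is compact. -/
theorem VI_solution_set_convex_closed_compact (n : ℕ) (S : Set (Fin n → ℝ))
    (F : (Fin n → ℝ) → (Fin n → ℝ))
    (hSne : S.Nonempty) (hSconv : Convex ℝ S) (hSclosed : IsClosed S)
    (hFcont : Continuous F)
    (hFmono : ∀ x y : Fin n → ℝ, 0 ≤ (F x - F y) ⬝ᵥ (x - y)) :
    Convex ℝ {x : Fin n → ℝ | x ∈ S ∧ ∀ y ∈ S, 0 ≤ (y - x) ⬝ᵥ F x} ∧
    IsClosed {x : Fin n → ℝ | x ∈ S ∧ ∀ y ∈ S, 0 ≤ (y - x) ⬝ᵥ F x} ∧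
    (IsCompact S →
      IsCompact {x : Fin n → ℝ | x ∈ S ∧ ∀ y ∈ S, 0 ≤ (y - x) ⬝ᵥ F x}) :=
  VI_solution_set_convex_closed_compact_general n S F hSconv hSclosed hFcont hFmono
end

section
/- Let M ∈ ℝ^{n×n}, q ∈ ℝⁿ, H ∈ ℝ^{m×n}, h ∈ ℝ^m, and let X := { y ∈ ℝⁿ : Hy ≤ h }. Let x₀ ∈ ℝⁿ and set c := (M + Mᵀ)x₀ and d := x₀ᵀMx₀. Let T ⊆ X and suppose x ∈ T and λ ∈ ℝ^m satisfy: λ ≥ 0 componentwise, Hᵀλ + Mx + q = 0, hᵀλ + qᵀx + d ≤ 0, and (M + Mᵀ)x = c. Then x is a solution of VI(T, F) with F(y) = My + q, i.e., (y − x)ᵀ(Mx + q) ≥ 0 for all y ∈ T. -/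
/-!
Since `S = M + Mᵀ` is symmetric, `Sx = Sx₀` gives `xᵀSx = xᵀSx₀ = x₀ᵀSx = x₀ᵀSx₀`, hence
`xᵀMx = d`. Stationarity turns `F(x) = Mx + q` into `-Hᵀλ`, so for `y ∈ T ⊆ X` weak duality gives
`yᵀF(x) = -λᵀHy ≥ -hᵀλ ≥ qᵀx + d = xᵀF(x)`.
-/

open Matrix

namespace Matrix

variable {ι κ R : Type*} [Fintype ι] [Fintype κ]

theorem IsSymm.dotProduct_mulVec_self_eq_of_mulVec_eq [CommSemiring R] {S : Matrix ι ι R}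
    (hS : S.IsSymm) {x x₀ : ι → R} (hx : S *ᵥ x = S *ᵥ x₀) :
    x ⬝ᵥ S *ᵥ x = x₀ ⬝ᵥ S *ᵥ x₀ := by
  calc x ⬝ᵥ S *ᵥ x = x ⬝ᵥ Sᵀ *ᵥ x₀ := by rw [hS.eq, hx]
    _ = x₀ ⬝ᵥ S *ᵥ x := dotProduct_transpose_mulVec S x x₀
    _ = x₀ ⬝ᵥ S *ᵥ x₀ := by rw [hx]

theorem dotProduct_add_transpose_mulVec_self [CommSemiring R] (M : Matrix ι ι R) (x : ι → R) :
    x ⬝ᵥ (M + Mᵀ) *ᵥ x = 2 * (x ⬝ᵥ M *ᵥ x) := by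
  rw [add_mulVec, dotProduct_add, dotProduct_transpose_mulVec, two_mul]

theorem dotProduct_mulVec_self_eq_of_add_transpose_mulVec_eq [CommRing R] [IsDomain R]
    [NeZero (2 : R)] {M : Matrix ι ι R} {x x₀ : ι → R}
    (hx : (M + Mᵀ) *ᵥ x = (M + Mᵀ) *ᵥ x₀) :
    x ⬝ᵥ M *ᵥ x = x₀ ⬝ᵥ M *ᵥ x₀ := by
  have h := (isSymm_add_transpose_self M).dotProduct_mulVec_self_eq_of_mulVec_eq hx
  rw [dotProduct_add_transpose_mulVec_self, dotProduct_add_transpose_mulVec_self] at h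
  exact mul_left_cancel₀ two_ne_zero h

theorem dotProduct_transpose_mulVec_le_of_mulVec_le [CommSemiring R] [PartialOrder R]
    [IsOrderedRing R] {H : Matrix κ ι R} {y : ι → R} {h lam : κ → R}
    (hy : H *ᵥ y ≤ h) (hlam : 0 ≤ lam) :
    y ⬝ᵥ Hᵀ *ᵥ lam ≤ h ⬝ᵥ lam := by
  rw [dotProduct_transpose_mulVec, dotProduct_comm h]
  exact dotProduct_le_dotProduct_of_nonneg_left hy hlam

theorem dotProduct_sub_nonneg_of_dual_certificate [CommRing R] [PartialOrder R]
    [IsOrderedRing R] {H : Matrix κ ι R} {h lam : κ → R} {g x y : ι → R}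
    (hlam : 0 ≤ lam) (hstat : Hᵀ *ᵥ lam + g = 0) (hgap : h ⬝ᵥ lam + x ⬝ᵥ g ≤ 0)
    (hy : H *ᵥ y ≤ h) :
    0 ≤ (y - x) ⬝ᵥ g := by
  have hg : g = -(Hᵀ *ᵥ lam) := eq_neg_of_add_eq_zero_right hstat
  have hyg : y ⬝ᵥ g = -(y ⬝ᵥ Hᵀ *ᵥ lam) := by rw [hg, dotProduct_neg]
  have hdual := dotProduct_transpose_mulVec_le_of_mulVec_le hy hlam
  calc 0 ≤ -(h ⬝ᵥ lam + x ⬝ᵥ g) := neg_nonneg.mpr hgap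
    _ = -(h ⬝ᵥ lam) - x ⬝ᵥ g := by ring
    _ ≤ -(y ⬝ᵥ Hᵀ *ᵥ lam) - x ⬝ᵥ g := by gcongr
    _ = (y - x) ⬝ᵥ g := by rw [sub_dotProduct, hyg]

end Matrix

theorem VI_solution_from_dual_certificate_general (n m : ℕ)
    (M : Matrix (Fin n) (Fin n) ℝ) (q : Fin n → ℝ)
    (H : Matrix (Fin m) (Fin n) ℝ) (h : Fin m → ℝ)
    (X : Set (Fin n → ℝ)) (hX : X = {y : Fin n → ℝ | ∀ i, H.mulVec y i ≤ h i})
    (x₀ : Fin n → ℝ) (c : Fin n → ℝ) (hc : c = (M + Mᵀ).mulVec x₀)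
    (d : ℝ) (hd : d = x₀ ⬝ᵥ M.mulVec x₀)
    (T : Set (Fin n → ℝ)) (hTX : T ⊆ X)
    (x : Fin n → ℝ) (lam : Fin m → ℝ)
    (hlam : ∀ i, 0 ≤ lam i)
    (hstat : Hᵀ.mulVec lam + M.mulVec x + q = 0)
    (hineq : h ⬝ᵥ lam + q ⬝ᵥ x + d ≤ 0)
    (hcx : (M + Mᵀ).mulVec x = c) :
    ∀ y ∈ T, 0 ≤ (y - x) ⬝ᵥ (M.mulVec x + q) := by
  intro y hyT
  have hy : H *ᵥ y ≤ h := by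
    have hyX := hTX hyT
    rwa [hX] at hyX
  have hxMx : x ⬝ᵥ M *ᵥ x = d := by
    rw [hd]
    exact dotProduct_mulVec_self_eq_of_add_transpose_mulVec_eq (hcx.trans hc)
  refine dotProduct_sub_nonneg_of_dual_certificate hlam ?_ ?_ hy
  · rwa [← add_assoc]
  · rw [dotProduct_add, hxMx, dotProduct_comm x q]
    linarith

/-- Dual feasibility certificate for equilibria: if `x ∈ T ⊆ X = {y : Hy ≤ h}`
and `λ ≥ 0` satisfy `Hᵀλ + Mx + q = 0`, `hᵀλ + qᵀx + d ≤ 0` and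
`(M + Mᵀ)x = c` (with `c = (M + Mᵀ)x₀`, `d = x₀ᵀMx₀`), then `x` solves
`VI(T, F)` with `F y = M y + q`. -/
theorem VI_solution_from_dual_certificate (n m : ℕ)
    (M : Matrix (Fin n) (Fin n) ℝ) (q : Fin n → ℝ)
    (H : Matrix (Fin m) (Fin n) ℝ) (h : Fin m → ℝ)
    (X : Set (Fin n → ℝ)) (hX : X = {y : Fin n → ℝ | ∀ i, H.mulVec y i ≤ h i})
    (x₀ : Fin n → ℝ) (c : Fin n → ℝ) (hc : c = (M + Mᵀ).mulVec x₀)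
    (d : ℝ) (hd : d = x₀ ⬝ᵥ M.mulVec x₀)
    (T : Set (Fin n → ℝ)) (hTX : T ⊆ X)
    (x : Fin n → ℝ) (hxT : x ∈ T) (lam : Fin m → ℝ)
    (hlam : ∀ i, 0 ≤ lam i)
    (hstat : Hᵀ.mulVec lam + M.mulVec x + q = 0)
    (hineq : h ⬝ᵥ lam + q ⬝ᵥ x + d ≤ 0)
    (hcx : (M + Mᵀ).mulVec x = c) :
    ∀ y ∈ T, 0 ≤ (y - x) ⬝ᵥ (M.mulVec x + q) :=
  VI_solution_from_dual_certificate_general n m M q H h X hX x₀ c hc d hd T hTX x lam hlam hstat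
    hineq hcx
end
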